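/- Write P_{aₙ} ∘ ⋯ ∘ P_{a₁}(x) = Σ_{i=0}^{2ⁿ} b_i(a) xⁱ as a polynomial in x with coefficients depending on a = (a₁,…,aₙ) ∈ ℂⁿ. Then for each n ≥ 1 and each 1 ≤ j ≤ n there exists a constant C_{n,j} ≠ 0, independent of a, such that for all a, a' ∈ ℂⁿ with a_k = a'_k for every k < j: (i) b_i(a) = b_i(a') for every index i > 2ⁿ − 2ʲ, and (ii) b_{2ⁿ−2ʲ}(a) − b_{2ⁿ−2ʲ}(a') = C_{n,j} · (a_j − a'_j). -/

import Mathlib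

/-- The polynomial `P_{aₙ} ∘ ⋯ ∘ P_{a₁}`, where `P_a(z) = z² + a`.
Here `a i` plays the role of `a_{i+1}`, i.e. `P_{a₁}` is applied first. -/
noncomputable def compQuadPoly : (n : ℕ) → (Fin n → ℂ) → Polynomial ℂ
  | 0, _ => Polynomial.X
  | n + 1, a =>
      (Polynomial.X ^ 2 + Polynomial.C (a (Fin.last n))).comp
        (compQuadPoly n (a ∘ Fin.castSucc))

open Polynomial in
lemma compQuadPoly_succ (n : ℕ) (a : Fin (n + 1) → ℂ) :
    compQuadPoly (n + 1) a =
      (compQuadPoly n (a ∘ Fin.castSucc)) ^ 2 + C (a (Fin.last n)) := by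
  simp [compQuadPoly, add_comp, pow_comp, X_comp, C_comp]

open Polynomial in
lemma compQuadPoly_monic (n : ℕ) (a : Fin n → ℂ) :
    (compQuadPoly n a).Monic ∧ (compQuadPoly n a).natDegree = 2 ^ n := by
  induction n with
  | zero => exact ⟨monic_X, natDegree_X⟩
  | succ n ih =>
    obtain ⟨hm, hd⟩ := ih (a ∘ Fin.castSucc)
    rw [compQuadPoly_succ]
    have hm2 : ((compQuadPoly n (a ∘ Fin.castSucc)) ^ 2).Monic := hm.pow 2
    have hd2 : ((compQuadPoly n (a ∘ Fin.castSucc)) ^ 2).natDegree = 2 ^ (n + 1) := by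
      rw [natDegree_pow, hd]; ring
    have hdegC : (C (a (Fin.last n))).degree <
        ((compQuadPoly n (a ∘ Fin.castSucc)) ^ 2).degree := by
      refine lt_of_le_of_lt degree_C_le ?_
      rw [degree_eq_natDegree hm2.ne_zero, hd2]
      exact_mod_cast pow_pos (by norm_num : (0:ℕ) < 2) (n + 1)
    refine ⟨hm2.add_of_left hdegC, ?_⟩
    rw [natDegree_add_C, hd2]

open Polynomial Finset in
lemma compQuadPoly_aux (n j : ℕ) (hj1 : 1 ≤ j) (hjn : j ≤ n) :
    ∃ C : ℂ, C ≠ 0 ∧ ∀ a a' : Fin n → ℂ,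
      (∀ k : Fin n, (k : ℕ) + 1 < j → a k = a' k) →
      (∀ i : ℕ, 2 ^ n - 2 ^ j < i →
          (compQuadPoly n a).coeff i = (compQuadPoly n a').coeff i) ∧
      (compQuadPoly n a).coeff (2 ^ n - 2 ^ j) -
          (compQuadPoly n a').coeff (2 ^ n - 2 ^ j) =
        C * (a ⟨j - 1, Nat.lt_of_lt_of_le (Nat.sub_lt hj1 Nat.one_pos) hjn⟩ -
          a' ⟨j - 1, Nat.lt_of_lt_of_le (Nat.sub_lt hj1 Nat.one_pos) hjn⟩) := by
  induction n with
  | zero => omega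
  | succ n ih =>
    rcases eq_or_lt_of_le hjn with hj | hj
    · -- j = n + 1
      subst hj
      refine ⟨1, one_ne_zero, fun a a' hag => ?_⟩
      have hQ : compQuadPoly n (a ∘ Fin.castSucc) =
          compQuadPoly n (a' ∘ Fin.castSucc) := by
        congr 1
        funext k
        exact hag (Fin.castSucc k) (by simpa using k.isLt)
      rw [Nat.sub_self]
      constructor
      · intro i hi
        rw [compQuadPoly_succ, compQuadPoly_succ, hQ, coeff_add, coeff_add,
          coeff_C, coeff_C, if_neg (by omega), if_neg (by omega)]
      · rw [compQuadPoly_succ, compQuadPoly_succ, hQ]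
        have hidx : (⟨n + 1 - 1, by omega⟩ : Fin (n + 1)) = Fin.last n := rfl
        rw [hidx]
        simp
    · -- j ≤ n
      have hjn' : j ≤ n := by omega
      obtain ⟨Cc, hCc, hC⟩ := ih hjn'
      refine ⟨2 * Cc, by simpa using hCc, fun a a' hag => ?_⟩
      obtain ⟨hQm, hQd⟩ := compQuadPoly_monic n (a ∘ Fin.castSucc)
      obtain ⟨hQ'm, hQ'd⟩ := compQuadPoly_monic n (a' ∘ Fin.castSucc)
      obtain ⟨ihA, ihB⟩ := hC (a ∘ Fin.castSucc) (a' ∘ Fin.castSucc)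
        (fun k hk => hag (Fin.castSucc k) (by simpa using hk))
      set Q := compQuadPoly n (a ∘ Fin.castSucc) with hQdef
      set Q' := compQuadPoly n (a' ∘ Fin.castSucc) with hQ'def
      have hQ1 : Q.coeff (2 ^ n) = 1 := by rw [← hQd]; exact hQm.coeff_natDegree
      have hQ'1 : Q'.coeff (2 ^ n) = 1 := by rw [← hQ'd]; exact hQ'm.coeff_natDegree
      have h2j : 2 ^ j ≤ 2 ^ n := Nat.pow_le_pow_right (by norm_num) hjn'
      have h2n1 : 2 ^ (n + 1) = 2 ^ n + 2 ^ n := by ring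
      set t := 2 ^ n - 2 ^ j with ht
      have hmm : 2 ^ (n + 1) - 2 ^ j = t + 2 ^ n := by omega
      set D := Q - Q' with hD
      set S := Q + Q' with hS
      have hDhi : ∀ i, t < i → D.coeff i = 0 := fun i hi => by
        rw [hD, coeff_sub, ihA i hi, sub_self]
      have hShi : ∀ i, 2 ^ n < i → S.coeff i = 0 := fun i hi => by
        rw [hS, coeff_add, coeff_eq_zero_of_natDegree_lt (by omega),
          coeff_eq_zero_of_natDegree_lt (by omega), add_zero]
      have hS2n : S.coeff (2 ^ n) = 2 := by
        rw [hS, coeff_add, hQ1, hQ'1]; norm_num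
      have hfact : Q ^ 2 - Q' ^ 2 = D * S := by rw [hD, hS]; ring
      have key : ∀ i, t + 2 ^ n ≤ i →
          (Q ^ 2).coeff i - (Q' ^ 2).coeff i =
            if i = t + 2 ^ n then D.coeff t * 2 else 0 := by
        intro i hi
        have hds : (Q ^ 2).coeff i - (Q' ^ 2).coeff i = (D * S).coeff i := by
          rw [← hfact, coeff_sub]
        rw [hds, coeff_mul]
        rcases eq_or_lt_of_le hi with hieq | hlt
        · subst hieq
          rw [if_pos rfl]
          rw [Finset.sum_eq_single (t, 2 ^ n)]
          · rw [hS2n]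
          · rintro ⟨x, y⟩ hmem hne
            simp only [Finset.HasAntidiagonal.mem_antidiagonal] at hmem
            rcases lt_trichotomy x t with hx | hx | hx
            · rw [hShi y (by omega), mul_zero]
            · subst hx
              have hy : y = 2 ^ n := by omega
              subst hy
              exact absurd rfl hne
            · rw [hDhi x hx, zero_mul]
          · intro h
            exact absurd (by simp : ((t, 2 ^ n) : ℕ × ℕ) ∈ Finset.HasAntidiagonal.antidiagonal (t + 2 ^ n)) h
        · rw [if_neg (by omega)]
          refine Finset.sum_eq_zero ?_
          rintro ⟨x, y⟩ hmem
          simp only [Finset.HasAntidiagonal.mem_antidiagonal] at hmem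
          rcases le_or_gt x t with hx | hx
          · rw [hShi y (by omega), mul_zero]
          · rw [hDhi x hx, zero_mul]
      have hcoeff : ∀ i, t + 2 ^ n ≤ i →
          (compQuadPoly (n + 1) a).coeff i - (compQuadPoly (n + 1) a').coeff i =
            (Q ^ 2).coeff i - (Q' ^ 2).coeff i := by
        intro i hi
        have h2npos : 0 < 2 ^ n := Nat.pow_pos (by norm_num)
        rw [compQuadPoly_succ, compQuadPoly_succ, ← hQdef, ← hQ'def, coeff_add,
          coeff_add, coeff_C, coeff_C, if_neg (by omega), if_neg (by omega)]
        ring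
      rw [hmm]
      constructor
      · intro i hi
        have h1 := hcoeff i (by omega)
        have h2 := key i (by omega)
        rw [if_neg (by omega)] at h2
        exact sub_eq_zero.mp (h1.trans h2)
      · have h1 := hcoeff (t + 2 ^ n) le_rfl
        have h2 := key (t + 2 ^ n) le_rfl
        rw [if_pos rfl] at h2
        rw [h1, h2, hD, coeff_sub, ihB]
        have hfin : ∀ b : Fin (n + 1) → ℂ,
            (b ∘ Fin.castSucc) (⟨j - 1, by omega⟩ : Fin n) =
              b (⟨j - 1, by omega⟩ : Fin (n + 1)) := fun b => rfl
        rw [hfin a, hfin a']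
        ring

/-- Coefficient structure of `P_{aₙ} ∘ ⋯ ∘ P_{a₁} = Σᵢ bᵢ(a) xⁱ`: for `1 ≤ j ≤ n`
there is a constant `C_{n,j} ≠ 0` such that whenever `a, a'` agree in the coordinates
`a_k` with `k < j`, all coefficients `bᵢ` with `i > 2ⁿ − 2ʲ` agree, and the coefficient
`b_{2ⁿ−2ʲ}` depends affinely on `a_j` with slope `C_{n,j}`.
(The Fin-indexed `a k` corresponds to the subscript `k + 1`.) -/
theorem compQuadPoly_coeff_structure (n : ℕ) (hn : 1 ≤ n) (j : ℕ)
    (hj1 : 1 ≤ j) (hjn : j ≤ n) :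
    ∃ C : ℂ, C ≠ 0 ∧ ∀ a a' : Fin n → ℂ,
      (∀ k : Fin n, (k : ℕ) + 1 < j → a k = a' k) →
      (∀ i : ℕ, 2 ^ n - 2 ^ j < i →
          (compQuadPoly n a).coeff i = (compQuadPoly n a').coeff i) ∧
      (compQuadPoly n a).coeff (2 ^ n - 2 ^ j) -
          (compQuadPoly n a').coeff (2 ^ n - 2 ^ j) =
        C * (a ⟨j - 1, by omega⟩ - a' ⟨j - 1, by omega⟩) := by
  exact compQuadPoly_aux n j hj1 hjn
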